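/- arXiv:math/0301048 — 4 statements merged into one kernel-verified Lean document; each statement's English description precedes it below -/
import Mathlib

section
/- Let p be a prime and m, s positive integers with m < p^s. Then for any nonnegative integers d_1, ..., d_k with d_1 + ... + d_k = m, the p-adic valuation of the multinomial coefficient m!/(d_1! ⋯ d_k!) is at most (k-1)(s-1), hence strictly less than (k-1)s when k ≥ 2. -/
lemma padicValNat_choose_le_of_lt_pow {p s n t : ℕ} (hp : p.Prime) (hs : 0 < s)
    (hn : n < p ^ s) : padicValNat p (n.choose t) ≤ s - 1 := by
  rw [← Nat.factorization_def _ hp]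
  refine Nat.factorization_choose_le_log.trans ?_
  rcases Nat.eq_zero_or_pos n with h | h
  · simp [h]
  · exact Nat.le_sub_one_of_lt (Nat.log_lt_of_lt_pow h.ne' hn)

lemma padicValNat_multinomial_le {p s : ℕ} (hp : p.Prime) (hs : 0 < s)
    {α : Type*} (S : Finset α) (d : α → ℕ) (hlt : ∑ i ∈ S, d i < p ^ s) :
    padicValNat p (Nat.multinomial S d) ≤ (S.card - 1) * (s - 1) := by
  haveI : Fact p.Prime := ⟨hp⟩
  induction S using Finset.cons_induction with
  | empty => simp [Nat.multinomial]
  | cons a S ha ih =>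
    rw [Nat.multinomial_cons, padicValNat.mul (Nat.choose_pos (Nat.le_add_right _ _)).ne'
      (Nat.multinomial_pos _ _).ne']
    have hsum : ∑ i ∈ S, d i < p ^ s := by
      refine lt_of_le_of_lt ?_ hlt
      rw [Finset.sum_cons]; omega
    have h1 : padicValNat p ((d a + ∑ i ∈ S, d i).choose (d a)) ≤ s - 1 := by
      refine padicValNat_choose_le_of_lt_pow hp hs ?_
      rwa [Finset.sum_cons] at hlt
    rcases S.eq_empty_or_nonempty with h | h
    · subst h; simp_all
    · have hc : 1 ≤ S.card := Finset.card_pos.mpr h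
      have := ih hsum
      rw [Finset.card_cons, Nat.add_sub_cancel]
      calc padicValNat p ((d a + ∑ i ∈ S, d i).choose (d a)) +
            padicValNat p (Nat.multinomial S d) ≤ (s - 1) + (S.card - 1) * (s - 1) :=
            Nat.add_le_add h1 this
        _ ≤ S.card * (s - 1) := by
            have h2 : S.card - 1 + 1 = S.card := Nat.succ_pred_eq_of_pos hc
            have : (S.card - 1 + 1) * (s - 1) = (S.card - 1) * (s - 1) + (s - 1) := by ring
            rw [h2] at this
            omega

theorem stmt_1 (p m s k : ℕ) (hp : p.Prime) (hm : 0 < m) (hs : 0 < s)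
    (hlt : m < p ^ s) (d : Fin k → ℕ) (hsum : ∑ i, d i = m) :
    padicValNat p (Nat.multinomial Finset.univ d) ≤ (k - 1) * (s - 1) ∧
      (2 ≤ k → padicValNat p (Nat.multinomial Finset.univ d) < (k - 1) * s) := by
  have h1 : padicValNat p (Nat.multinomial Finset.univ d) ≤ (k - 1) * (s - 1) := by
    have := padicValNat_multinomial_le hp hs (Finset.univ : Finset (Fin k)) d
      (by rw [hsum]; exact hlt)
    simpa using this
  refine ⟨h1, fun hk => lt_of_le_of_lt h1 ?_⟩
  have : 1 ≤ k - 1 := by omega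
  exact mul_lt_mul_of_pos_left (by omega) (by omega)
end

section
/- Let n = p^r be a prime power and let k be an integer with 2 ≤ k ≤ n. Then for any nonnegative integers r_1, ..., r_k with (r_1 - 1) + ... + (r_k - 1) = n - k, the p-adic valuation of n^{k-1} is strictly greater than the p-adic valuation of (n-1)(n-2)⋯(n-k+1) · (n-k)!/((r_1 - 1)! ⋯ (r_k - 1)!). -/
/-!
Write `n = p ^ r`. The product `(n - 1) ⋯ (n - k + 1)` is `(p ^ r - 1).descFactorial (k - 1)`;
multiplied by `p ^ r` it becomes `k! * C(p ^ r, k)`, and `v(C(p ^ r, k)) + v(k) = r`, so its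
valuation is that of `(k - 1)!`, which by Legendre's formula is `< k - 1`. The multinomial
coefficient is a product of `k - 1` binomial coefficients `C(m, j)` with `m ≤ n - k < p ^ r`,
each of valuation at most `log_p m ≤ r - 1`.
Altogether the valuation is `< (k - 1) r = v(n ^ (k - 1))`.
-/

open Finset Nat

section

variable {p : ℕ} [hp : Fact p.Prime]

theorem padicValNat_descFactorial_pow_sub_one {r m : ℕ} (hm : m < p ^ r) :
    padicValNat p ((p ^ r - 1).descFactorial m) = padicValNat p m ! := by
  have hpr : p ^ r ≠ 0 := pow_ne_zero _ hp.out.ne_zero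
  have hdesc : p ^ r * (p ^ r - 1).descFactorial m = (m + 1)! * (p ^ r).choose (m + 1) := by
    rw [← descFactorial_eq_factorial_mul_choose,
      ← Nat.sub_add_cancel (one_le_iff_ne_zero.2 hpr), succ_descFactorial_succ,
      Nat.add_sub_cancel]
  have hchoose : padicValNat p ((p ^ r).choose (m + 1)) + padicValNat p (m + 1) = r := by
    simpa only [factorization_def _ hp.out] using
      factorization_choose_prime_pow_add_factorization hp.out hm m.succ_ne_zero
  have hval := congrArg (padicValNat p) hdesc
  rw [padicValNat.mul hpr (descFactorial_pos.2 (by omega)).ne', factorial_succ,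
    padicValNat.mul (by positivity) (choose_pos hm).ne',
    padicValNat.mul (succ_ne_zero m) (factorial_ne_zero m), padicValNat.prime_pow,
    succ_eq_add_one] at hval
  omega

theorem padicValNat_multinomial_le_s3 {α : Type*} [DecidableEq α] (s : Finset α) (f : α → ℕ) :
    padicValNat p (multinomial s f) ≤ (#s - 1) * log p (∑ i ∈ s, f i) := by
  induction s using Finset.induction_on with
  | empty => simp
  | insert a s ha ih =>
    rcases s.eq_empty_or_nonempty with rfl | hs
    · simp
    set L := log p (∑ i ∈ insert a s, f i) with hL
    have hlog : log p (∑ i ∈ s, f i) ≤ L :=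
      log_mono_right (sum_le_sum_of_subset (subset_insert a s))
    have hchoose : padicValNat p ((f a + ∑ i ∈ s, f i).choose (f a)) ≤ L := by
      rw [← factorization_def _ hp.out, hL, sum_insert ha]
      exact factorization_choose_le_log
    rw [multinomial_insert ha, padicValNat.mul (choose_pos (le_add_right _ _)).ne'
      (multinomial_pos s f).ne', card_insert_of_notMem ha, Nat.add_sub_cancel]
    calc _ ≤ L + (#s - 1) * L := Nat.add_le_add hchoose (ih.trans (Nat.mul_le_mul_left _ hlog))
      _ = (#s - 1 + 1) * L := by ring
      _ = #s * L := by rw [Nat.sub_add_cancel hs.card_pos]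

end

theorem stmt_3_general (p r n k : ℕ) (hp : p.Prime) (hr : 0 < r) (hn : n = p ^ r)
    (hk2 : 2 ≤ k) (hkn : k ≤ n) (R : Fin k → ℕ)
    (hsum : ∑ j, (R j - 1) = n - k) :
    padicValNat p ((∏ i ∈ Finset.range (k - 1), (n - 1 - i)) *
        Nat.multinomial Finset.univ (fun j => R j - 1))
      < padicValNat p (n ^ (k - 1)) := by
  have : Fact p.Prime := ⟨hp⟩
  subst hn
  set L := log p (p ^ r - k)
  have hL : L + 1 ≤ r := log_lt_of_lt_pow' hr.ne' (by omega)
  have hdesc : padicValNat p (∏ i ∈ range (k - 1), (p ^ r - 1 - i)) < k - 1 := by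
    rw [← descFactorial_eq_prod_range, padicValNat_descFactorial_pow_sub_one (by omega)]
    exact padicValNat_factorial_lt_of_ne_zero p (by omega)
  have hmult : padicValNat p (multinomial univ fun j => R j - 1) ≤ (k - 1) * L := by
    simpa only [Finset.card_univ, Fintype.card_fin, hsum] using
      padicValNat_multinomial_le_s3 (p := p) univ (fun j => R j - 1)
  rw [padicValNat.mul (prod_ne_zero_iff.2 fun i hi => by rw [mem_range] at hi; omega)
    (multinomial_pos _ _).ne', ← pow_mul, padicValNat.prime_pow]
  calc _ < (k - 1) + (k - 1) * L := by omega
    _ = (k - 1) * (L + 1) := by ring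
    _ ≤ (k - 1) * r := Nat.mul_le_mul_left _ hL
    _ = r * (k - 1) := mul_comm _ _

theorem stmt_3 (p r n k : ℕ) (hp : p.Prime) (hr : 0 < r) (hn : n = p ^ r)
    (hk2 : 2 ≤ k) (hkn : k ≤ n) (R : Fin k → ℕ) (hR : ∀ j, 1 ≤ R j)
    (hsum : ∑ j, (R j - 1) = n - k) :
    padicValNat p ((∏ i ∈ Finset.range (k - 1), (n - 1 - i)) *
        Nat.multinomial Finset.univ (fun j => R j - 1))
      < padicValNat p (n ^ (k - 1)) :=
  stmt_3_general p r n k hp hr hn hk2 hkn R hsum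
end

section
/- For every positive integer n, the number of monomials appearing in the determinant of the generic n × n circulant matrix is at most the number appearing in its permanent, i.e., d(n) ≤ p(n). -/
/-!
Every term `∏ i, A i (σ i)` of the permanent is a polynomial with nonnegative coefficients, so no
cancellation can occur in the permanent: its support is the union of the supports of its terms.
The determinant is the signed sum of the same terms, so its support lies in that union.
-/

open MvPolynomial Finset
open scoped Matrix

namespace MvPolynomial

variable {σ R : Type*} [CommSemiring R] [PartialOrder R] [IsOrderedRing R]

variable (σ R) in
def nonnegCoeffs : Subsemiring (MvPolynomial σ R) where
  carrier := {p | ∀ m, 0 ≤ p.coeff m}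
  zero_mem' m := by simp
  one_mem' m := by
    classical
    rw [coeff_one]
    split_ifs <;> simp
  add_mem' hp hq m := by
    rw [coeff_add]
    exact add_nonneg (hp m) (hq m)
  mul_mem' hp hq m := by
    classical
    rw [coeff_mul]
    exact sum_nonneg fun x _ => mul_nonneg (hp x.1) (hq x.2)

theorem X_mem_nonnegCoeffs (i : σ) : X i ∈ nonnegCoeffs σ R := by
  classical
  intro m
  rw [coeff_X]
  split_ifs <;> simp

theorem support_sum_of_mem_nonnegCoeffs [DecidableEq σ] {ι : Type*} {s : Finset ι}
    {f : ι → MvPolynomial σ R} (hf : ∀ i ∈ s, f i ∈ nonnegCoeffs σ R) :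
    (∑ i ∈ s, f i).support = s.biUnion fun i => (f i).support := by
  ext m
  simp only [mem_support_iff, coeff_sum, mem_biUnion, ne_eq]
  rw [sum_eq_zero_iff_of_nonneg fun i hi => hf i hi m]
  push Not
  rfl

end MvPolynomial

namespace Matrix

variable {n σ R : Type*} [Fintype n] [DecidableEq n] [CommRing R] [PartialOrder R] [IsOrderedRing R]

theorem support_det_subset_support_permanent [DecidableEq σ] {M : Matrix n n (MvPolynomial σ R)}
    (hM : ∀ i j, M i j ∈ nonnegCoeffs σ R) : M.det.support ⊆ M.permanent.support := by
  rw [det_apply, permanent, support_sum_of_mem_nonnegCoeffs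
    fun τ _ => (nonnegCoeffs σ R).prod_mem fun i _ => hM (τ i) i]
  refine support_sum.trans (biUnion_mono fun τ _ => ?_)
  rw [Units.smul_def]
  exact support_smul

end Matrix

theorem stmt_14_general (n : ℕ)
    (A : Matrix (Fin n) (Fin n) (MvPolynomial (Fin n) ℚ))
    (hA : ∀ i j, A i j = MvPolynomial.X (i + j)) :
    A.det.support.card
      ≤ (∑ σ : Equiv.Perm (Fin n), ∏ i, A i (σ i)).support.card := by
  have hAT : ∀ i j, Aᵀ i j ∈ nonnegCoeffs (Fin n) ℚ := fun i j => by
    rw [Matrix.transpose_apply, hA]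
    exact X_mem_nonnegCoeffs _
  calc A.det.support.card = Aᵀ.det.support.card := by rw [Matrix.det_transpose]
    _ ≤ Aᵀ.permanent.support.card := card_le_card (Matrix.support_det_subset_support_permanent hAT)

theorem stmt_14 (n : ℕ) (hn : 0 < n)
    (A : Matrix (Fin n) (Fin n) (MvPolynomial (Fin n) ℚ))
    (hA : ∀ i j, A i j = MvPolynomial.X (i + j)) :
    A.det.support.card
      ≤ (∑ σ : Equiv.Perm (Fin n), ∏ i, A i (σ i)).support.card :=
  stmt_14_general n A hA
end

section
/- For every positive integer n, the number of solutions in nonnegative integers to y_1 + 2y_2 + ... + ny_n ≡ 0 (mod n) with y_1 + ... + y_n = n equals (1/n) Σ_{d | n} φ(n/d) C(2d - 1, d). -/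
/-!
Roots-of-unity filter. With `ζ` a primitive `n`-th root of unity and `w y = ∑ (i + 1) y_i`,
`n · #{y | n ∣ w y} = ∑_{j < n} ∑_y (ζ ^ j) ^ (w y)`. For fixed `j`, put `g = gcd n j`: then
`ζ ^ j` is a primitive `(n / g)`-th root of unity, the powers `ζ ^ (j (i + 1))`, `i < n`, run `g`
times through all `(n / g)`-th roots of unity, so the inner sum is the coefficient of `X ^ n`
in `∏_i (1 - ζ ^ (j (i + 1)) X)⁻¹ = (1 - X ^ (n / g)) ^ (-g)`, namely `C(2g - 1, g)`. Finally,
exactly `φ (n / g)` residues `j < n` have `gcd n j = g`.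
-/

open Finset

theorem Nat.sum_range_gcd_eq_sum_divisors {M : Type*} [AddCommMonoid M] (n : ℕ) (f : ℕ → M) :
    ∑ k ∈ range n, f (n.gcd k) = ∑ d ∈ n.divisors, (n / d).totient • f d := by
  rcases n.eq_zero_or_pos with rfl | hn
  · simp
  rw [← sum_fiberwise_of_maps_to (g := n.gcd) fun k _ ↦
    Nat.mem_divisors.mpr ⟨Nat.gcd_dvd_left n k, hn.ne'⟩]
  refine sum_congr rfl fun d hd ↦ ?_
  rw [Nat.totient_div_of_dvd (Nat.dvd_of_mem_divisors hd), ← sum_const]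
  exact sum_congr rfl fun k hk ↦ by rw [(mem_filter.mp hk).2]

namespace PowerSeries

variable {R : Type*}

theorem rescale_mk_one_mul_one_sub_C_mul_X [CommRing R] (a : R) :
    rescale a (mk 1) * (1 - C a * X) = 1 := by
  simpa [rescale_X] using congrArg (rescale a) (mk_one_mul_one_sub_eq_one R)

theorem coeff_subst_X_pow_invOneSubPow [CommRing R] {q : ℕ} (hq : q ≠ 0) {d : ℕ}
    (hd : 0 < d) :
    coeff (q * d) (subst (X ^ q : R⟦X⟧) (invOneSubPow R d : R⟦X⟧)) =
      (2 * d - 1).choose d := by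
  rw [coeff_subst_X_pow hq, if_pos (dvd_mul_right q d),
    Nat.mul_div_cancel_left d (Nat.pos_of_ne_zero hq),
    invOneSubPow_val_eq_mk_sub_one_add_choose_of_pos R d hd, coeff_mk, Algebra.algebraMap_self,
    RingHom.id_apply, Nat.choose_symm_add]
  congr 2
  omega

theorem subst_X_pow_invOneSubPow_mul [CommRing R] {q : ℕ} (hq : q ≠ 0) (d : ℕ) :
    subst (X ^ q : R⟦X⟧) (invOneSubPow R d : R⟦X⟧) * (1 - X ^ q) ^ d = 1 := by
  have h := congrArg (substAlgHom (R := R) (HasSubst.X_pow (R := R) hq))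
    (invOneSubPow R d).val_inv
  rwa [invOneSubPow_inv_eq_one_sub_pow, map_mul, map_one, map_pow, map_sub, map_one,
    substAlgHom_X, coe_substAlgHom] at h

theorem coeff_prod_eq_sum_fin [CommSemiring R] {ι : Type*} [Fintype ι] [DecidableEq ι]
    (f : ι → R⟦X⟧) (N : ℕ) :
    coeff N (∏ i, f i) = ∑ y ∈ univ.filter (fun y : ι → Fin (N + 1) => ∑ i, (y i : ℕ) = N),
      ∏ i, coeff (y i) (f i) := by
  have hle {l : ι →₀ ℕ} (hl : l ∈ finsuppAntidiag univ N) (i : ι) : l i < N + 1 :=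
    Nat.lt_succ_of_le <| (mem_finsuppAntidiag.mp hl).1 ▸ single_le_sum (by simp) (mem_univ i)
  rw [coeff_prod]
  symm
  refine sum_bij' (fun y _ ↦ Finsupp.equivFunOnFinite.symm fun i ↦ (y i : ℕ))
    (fun l hl i ↦ ⟨l i, hle hl i⟩) (fun y hy ↦ ?_) (fun l hl ↦ ?_) (fun _ _ ↦ rfl)
    (fun _ _ ↦ by ext; rfl) (fun _ _ ↦ rfl)
  · simpa [mem_finsuppAntidiag] using hy
  · simpa using (mem_finsuppAntidiag.mp hl).1

end PowerSeries

namespace IsPrimitiveRoot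

variable {R : Type*} [CommRing R] {ζ : R} {n : ℕ}

theorem sum_range_pow_pow [IsDomain R] (h : IsPrimitiveRoot ζ n) (m : ℕ) :
    ∑ j ∈ range n, (ζ ^ j) ^ m = if n ∣ m then (n : R) else 0 := by
  simp_rw [← pow_mul, mul_comm _ m, pow_mul]
  split_ifs with hm
  · simp [(h.pow_eq_one_iff_dvd m).mpr hm]
  · have hne : ζ ^ m - 1 ≠ 0 := sub_ne_zero.mpr fun h1 ↦ hm ((h.pow_eq_one_iff_dvd m).mp h1)
    refine (mul_eq_zero.mp ?_).resolve_right hne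
    rw [geom_sum_mul, ← pow_mul, mul_comm, pow_mul, h.pow_eq_one, one_pow, sub_self]

theorem pow_div_gcd (h : IsPrimitiveRoot ζ n) (hn : 0 < n) (j : ℕ) :
    IsPrimitiveRoot (ζ ^ j) (n / n.gcd j) := by
  have := IsPrimitiveRoot.orderOf (ζ ^ j)
  rwa [(h.isOfFinOrder hn.ne').orderOf_pow, ← h.eq_orderOf] at this

theorem prod_range_sub_pow_mul [IsDomain R] (h : IsPrimitiveRoot ζ n) (hn : 0 < n) (x y : R) :
    ∏ i ∈ range n, (x - ζ ^ i * y) = x ^ n - y ^ n := by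
  classical
  have hroots : Polynomial.nthRootsFinset n (1 : R) = (range n).image (ζ ^ ·) := by
    ext μ
    rw [Polynomial.mem_nthRootsFinset hn, mem_image]
    refine ⟨fun hμ ↦ ?_, ?_⟩
    · have : NeZero n := ⟨hn.ne'⟩
      obtain ⟨i, hi, rfl⟩ := h.eq_pow_of_pow_eq_one hμ
      exact ⟨i, mem_range.mpr hi, rfl⟩
    · rintro ⟨i, -, rfl⟩
      rw [← pow_mul, mul_comm, pow_mul, h.pow_eq_one, one_pow]
  rw [h.pow_sub_pow_eq_prod_sub_mul x y hn, hroots, prod_image h.injOn_pow]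

theorem prod_range_mul_sub_pow_mul [IsDomain R] (h : IsPrimitiveRoot ζ n) (hn : 0 < n)
    (x y : R) (d : ℕ) : ∏ i ∈ range (n * d), (x - ζ ^ i * y) = (x ^ n - y ^ n) ^ d := by
  induction d with
  | zero => simp
  | succ d ih =>
    rw [Nat.mul_succ, prod_range_add, ih, pow_succ, ← h.prod_range_sub_pow_mul hn]
    congr 1
    refine prod_congr rfl fun i _ ↦ ?_
    rw [pow_add, pow_mul, h.pow_eq_one, one_pow, one_mul]

end IsPrimitiveRoot

open PowerSeries in
theorem sum_pow_weight_eq_choose {K : Type*} [CommRing K] [IsDomain K] {α : K}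
    {q d n : ℕ} (hα : IsPrimitiveRoot α q) (hq : 0 < q) (hd : 0 < d) (hn : q * d = n) :
    ∑ y ∈ univ.filter (fun y : Fin n → Fin (n + 1) => ∑ i, (y i : ℕ) = n),
      α ^ (∑ i : Fin n, ((i : ℕ) + 1) * (y i : ℕ)) = (2 * d - 1).choose d := by
  have hprod : ∏ i : Fin n, (1 - C (α ^ ((i : ℕ) + 1)) * X) = (1 - X ^ q : K⟦X⟧) ^ d := by
    have hC : IsPrimitiveRoot (C α : K⟦X⟧) q := hα.map_of_injective C_injective
    have hXq : (1 - X ^ q : K⟦X⟧) = 1 ^ q - (C α * X) ^ q := by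
      rw [one_pow, mul_pow, ← map_pow, hα.pow_eq_one, map_one, one_mul]
    rw [Fin.prod_univ_eq_prod_range (fun i ↦ 1 - C (α ^ (i + 1)) * X), ← hn, hXq,
      ← hC.prod_range_mul_sub_pow_mul hq]
    refine prod_congr rfl fun i _ ↦ ?_
    rw [map_pow, pow_succ, mul_assoc]
  have hgf : ∏ i : Fin n, rescale (α ^ ((i : ℕ) + 1)) (mk 1)
      = subst (X ^ q : K⟦X⟧) (invOneSubPow K d : K⟦X⟧) := by
    refine left_inv_eq_right_inv (a := (1 - X ^ q : K⟦X⟧) ^ d) ?_ ?_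
    · rw [← hprod, ← prod_mul_distrib]
      exact prod_eq_one fun i _ ↦ rescale_mk_one_mul_one_sub_C_mul_X _
    · rw [mul_comm, subst_X_pow_invOneSubPow_mul hq.ne']
  calc _ = ∑ y ∈ univ.filter (fun y : Fin n → Fin (n + 1) => ∑ i, (y i : ℕ) = n),
        ∏ i, coeff (y i) (rescale (α ^ ((i : ℕ) + 1)) (mk 1)) := by
        refine sum_congr rfl fun y _ ↦ ?_
        simp only [coeff_rescale, coeff_mk, Pi.one_apply, mul_one, ← pow_mul,
          prod_pow_eq_pow_sum]
    _ = coeff (q * d) (subst (X ^ q : K⟦X⟧) (invOneSubPow K d : K⟦X⟧)) := by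
        rw [← coeff_prod_eq_sum_fin, hgf, hn]
    _ = (2 * d - 1).choose d := coeff_subst_X_pow_invOneSubPow hq.ne' hd

theorem stmt_17 (n : ℕ) (hn : 0 < n) :
    n * (Finset.univ.filter (fun y : Fin n → Fin (n + 1) =>
        (∑ i : Fin n, (y i : ℕ)) = n ∧
        (∑ i : Fin n, ((i : ℕ) + 1) * (y i : ℕ)) % n = 0)).card
      = ∑ d ∈ n.divisors, Nat.totient (n / d) * Nat.choose (2 * d - 1) d := by
  set T := univ.filter (fun y : Fin n → Fin (n + 1) => ∑ i, (y i : ℕ) = n)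
  set w : (Fin n → Fin (n + 1)) → ℕ := fun y ↦ ∑ i : Fin n, ((i : ℕ) + 1) * (y i : ℕ)
  obtain ⟨ζ, hζ⟩ : ∃ ζ : ℂ, IsPrimitiveRoot ζ n := ⟨_, Complex.isPrimitiveRoot_exp n hn.ne'⟩
  have hcount :
      (n : ℂ) * #(T.filter fun y ↦ n ∣ w y) = ∑ j ∈ range n, ∑ y ∈ T, (ζ ^ j) ^ w y := by
    rw [sum_comm]
    simp_rw [hζ.sum_range_pow_pow, sum_ite, sum_const_zero, add_zero, sum_const, nsmul_eq_mul,
      mul_comm]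
  have hterm (j : ℕ) : ∑ y ∈ T, (ζ ^ j) ^ w y = (2 * n.gcd j - 1).choose (n.gcd j) :=
    sum_pow_weight_eq_choose (hζ.pow_div_gcd hn j)
      (Nat.div_pos (Nat.gcd_le_left j hn) (Nat.gcd_pos_of_pos_left j hn))
      (Nat.gcd_pos_of_pos_left j hn) (Nat.div_mul_cancel (Nat.gcd_dvd_left n j))
  have hfilter : T.filter (fun y ↦ n ∣ w y) = univ.filter (fun y : Fin n → Fin (n + 1) =>
      (∑ i : Fin n, (y i : ℕ)) = n ∧ (∑ i : Fin n, ((i : ℕ) + 1) * (y i : ℕ)) % n = 0) := by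
    simp only [T, w, filter_filter, Nat.dvd_iff_mod_eq_zero]
  rw [← hfilter]
  apply Nat.cast_injective (R := ℂ)
  push_cast
  rw [hcount, sum_congr rfl fun j _ ↦ hterm j,
    Nat.sum_range_gcd_eq_sum_divisors n fun d ↦ ((2 * d - 1).choose d : ℂ)]
  simp only [nsmul_eq_mul]
end
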